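/- arXiv:1502.01796 — 2 statements merged into one kernel-verified Lean document; each statement's English description precedes it below -/
import Mathlib

section
/- Let n ∈ ℤ⁺ and ε, b > 0. With χₙ(x;ε,b) = xⁿχ(x;ε,b), the limit as x → ε⁺ of (χₙ'''(x;ε,b))²/χₙ'(x;ε,b) equals 0; consequently the ratio (χₙ''')²/χₙ' is bounded on [ε, b+ε] by a constant c(n,b). -/
/-!
On `(ε, b + ε)` the function `χₙ` is the polynomial `xⁿ ρ((x - ε)/b)`, which vanishes to order
exactly six at `ε` because `ρ(s) = s⁶ (462 - …)`. Hence `χₙ' = (x - ε)⁵ B` with `B(ε) ≠ 0` and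
`χₙ''' = (x - ε)³ A`, so the ratio is `(x - ε) A² / B`. This tends to `0` at `ε`, and is continuous
on all of `[ε, b + ε]` since `B` has no zero there: for `x > ε`, `χₙ' = n xⁿ⁻¹ ρ + xⁿ ρ' / b > 0`.
-/

open MeasureTheory intervalIntegral Set Filter Topology Polynomial

theorem Polynomial.iteratedDeriv_eval {𝕜 : Type*} [NontriviallyNormedField 𝕜] (p : 𝕜[X])
    (k : ℕ) : iteratedDeriv k (fun x => p.eval x) = fun x => (derivative^[k] p).eval x := by
  induction k with
  | zero => simp
  | succ k ih => ext x; rw [iteratedDeriv_succ, ih, Function.iterate_succ_apply', Polynomial.deriv]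

theorem Polynomial.derivative_X_sub_C_pow_succ_mul {R : Type*} [CommRing R] (a : R) (k : ℕ)
    (H : R[X]) : derivative ((X - C a) ^ (k + 1) * H) =
      (X - C a) ^ k * (C ((k : R) + 1) * H + (X - C a) * derivative H) := by
  rw [derivative_mul, derivative_X_sub_C_pow]
  simp only [Nat.cast_add, Nat.cast_one, add_tsub_cancel_right]
  ring

theorem Polynomial.exists_derivative_eq_X_sub_C_pow_mul {R : Type*} [CommRing R] [IsDomain R]
    [CharZero R] {a : R} {k : ℕ} {H : R[X]} (hH : H.eval a ≠ 0) :
    ∃ B : R[X], derivative ((X - C a) ^ (k + 1) * H) = (X - C a) ^ k * B ∧ B.eval a ≠ 0 := by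
  refine ⟨_, derivative_X_sub_C_pow_succ_mul a k H, ?_⟩
  simpa using ⟨by exact_mod_cast k.succ_ne_zero, hH⟩

theorem exists_abs_le_of_eqOn_Ioo {f g : ℝ → ℝ} {a c : ℝ} (hg : ContinuousOn g (Icc a c))
    (hfg : EqOn f g (Ioo a c)) : ∃ C, ∀ x ∈ Icc a c, |f x| ≤ C := by
  obtain ⟨M, hM⟩ := isCompact_Icc.exists_bound_of_continuousOn hg
  refine ⟨max (max |f a| |f c|) M, fun x hx => ?_⟩
  rcases hx.1.eq_or_lt with rfl | hax
  · simp
  rcases hx.2.eq_or_lt with rfl | hxc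
  · simp
  rw [hfg ⟨hax, hxc⟩]
  exact (hM x hx).trans (le_max_right _ _)

theorem tendsto_sq_div_and_exists_abs_le {g h A B : ℝ → ℝ} {a c : ℝ} (hac : a < c)
    (hA : Continuous A) (hB : Continuous B) (hB0 : ∀ x ∈ Icc a c, B x ≠ 0)
    (hg : EqOn g (fun x => (x - a) ^ 3 * A x) (Ioo a c))
    (hh : EqOn h (fun x => (x - a) ^ 5 * B x) (Ioo a c)) :
    Tendsto (fun x => g x ^ 2 / h x) (𝓝[>] a) (𝓝 0) ∧
      ∃ C, ∀ x ∈ Icc a c, |g x ^ 2 / h x| ≤ C := by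
  set φ : ℝ → ℝ := fun x => (x - a) * (A x ^ 2 / B x)
  have hφ (x : ℝ) (hx : B x ≠ 0) : ContinuousAt φ x := by fun_prop (disch := exact hx)
  have hratio : EqOn (fun x => g x ^ 2 / h x) φ (Ioo a c) := by
    intro x hx
    have hxa : x - a ≠ 0 := sub_ne_zero.2 hx.1.ne'
    have hBx := hB0 x (Ioo_subset_Icc_self hx)
    simp only [φ, hg hx, hh hx]
    field_simp
  refine ⟨?_, exists_abs_le_of_eqOn_Ioo (fun x hx => (hφ x (hB0 x hx)).continuousWithinAt) hratio⟩
  have hlim : Tendsto φ (𝓝[>] a) (𝓝 0) := by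
    simpa [φ] using (hφ a (hB0 a (left_mem_Icc.2 hac.le))).tendsto.mono_left nhdsWithin_le_nhds
  refine hlim.congr' ?_
  filter_upwards [Ioo_mem_nhdsGT hac] with x hx
  exact (hratio hx).symm

noncomputable section

/-- `ρ(x) = 2772 ∫₀ˣ y⁵(1-y)⁵ dy = x⁶ · rhoCofactor x`. -/
def rhoCofactor : ℝ[X] :=
  462 - 1980 * X + 3465 * X ^ 2 - 3080 * X ^ 3 + 1386 * X ^ 4 - 252 * X ^ 5

def rhoPoly : ℝ[X] := X ^ 6 * rhoCofactor

theorem derivative_rhoPoly : derivative rhoPoly = 2772 * X ^ 5 * (1 - X) ^ 5 := by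
  simp only [rhoPoly, rhoCofactor, derivative_mul, derivative_X_pow, derivative_sub,
    derivative_add, derivative_ofNat, derivative_X]
  simp only [map_ofNat, Nat.cast_ofNat]
  ring

theorem integral_eq_eval_rhoPoly (x : ℝ) :
    2772 * ∫ y in (0:ℝ)..x, y ^ 5 * (1 - y) ^ 5 = rhoPoly.eval x := by
  have hderiv (y : ℝ) : (derivative rhoPoly).eval y = 2772 * (y ^ 5 * (1 - y) ^ 5) := by
    simp [derivative_rhoPoly]; ring
  rw [← intervalIntegral.integral_const_mul]
  simp_rw [← hderiv]
  rw [integral_eq_sub_of_hasDerivAt (fun y _ => rhoPoly.hasDerivAt y)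
    ((derivative rhoPoly).continuous.intervalIntegrable _ _)]
  simp [rhoPoly]

theorem eval_rhoPoly_pos {s : ℝ} (hs : 0 < s) (hs1 : s ≤ 1) : 0 < rhoPoly.eval s := by
  rw [← integral_eq_eval_rhoPoly]
  refine mul_pos (by norm_num) (intervalIntegral_pos_of_pos_on ?_ (fun y hy => ?_) hs)
  · exact (by fun_prop : Continuous fun y : ℝ => y ^ 5 * (1 - y) ^ 5).intervalIntegrable _ _
  · have : 0 < 1 - y := by linarith [hy.2]
    exact mul_pos (pow_pos hy.1 5) (pow_pos this 5)

/-- `x ↦ xⁿ ρ((x - ε)/b)`, the polynomial that `χₙ` agrees with on `(ε, b + ε)`. -/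
def chiPoly (n : ℕ) (ε b : ℝ) : ℝ[X] := X ^ n * rhoPoly.comp (C b⁻¹ * (X - C ε))

theorem chiPoly_eq_X_sub_C_pow_mul (n : ℕ) (ε b : ℝ) :
    chiPoly n ε b =
      (X - C ε) ^ 6 * (C b⁻¹ ^ 6 * X ^ n * rhoCofactor.comp (C b⁻¹ * (X - C ε))) := by
  simp only [chiPoly, rhoPoly, mul_comp, X_pow_comp]
  ring

theorem derivative_chiPoly (n : ℕ) (ε b : ℝ) :
    derivative (chiPoly n ε b) = C (n : ℝ) * X ^ (n - 1) * rhoPoly.comp (C b⁻¹ * (X - C ε)) +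
      X ^ n * ((derivative rhoPoly).comp (C b⁻¹ * (X - C ε)) * C b⁻¹) := by
  rw [chiPoly, derivative_mul, derivative_X_pow, derivative_comp]
  simp only [derivative_mul, derivative_C, derivative_sub, derivative_X]
  ring

theorem eval_derivative_chiPoly_pos {n : ℕ} (hn : 1 ≤ n) {ε b x : ℝ} (hε : 0 < ε) (hb : 0 < b)
    (hx : ε < x) (hxb : x ≤ b + ε) : 0 < (derivative (chiPoly n ε b)).eval x := by
  have hs : 0 < b⁻¹ * (x - ε) := mul_pos (inv_pos.2 hb) (sub_pos.2 hx)
  have hs1 : b⁻¹ * (x - ε) ≤ 1 := by rw [inv_mul_le_iff₀ hb]; linarith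
  have hρ := eval_rhoPoly_pos hs hs1
  have hx0 : 0 < x := hε.trans hx
  have hn' : (0 : ℝ) < n := by exact_mod_cast hn
  have h1s : 0 ≤ 1 - b⁻¹ * (x - ε) := by linarith
  simp only [derivative_chiPoly, derivative_rhoPoly, eval_add, eval_mul, eval_pow, eval_comp,
    eval_sub, eval_C, eval_X, eval_one, eval_ofNat]
  positivity

theorem X_sub_C_pow_dvd_iterate_derivative_chiPoly (n : ℕ) (ε b : ℝ) :
    (X - C ε) ^ 3 ∣ derivative^[3] (chiPoly n ε b) :=
  pow_sub_dvd_iterate_derivative_of_pow_dvd (n := 6) 3 ⟨_, chiPoly_eq_X_sub_C_pow_mul n ε b⟩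

theorem exists_derivative_chiPoly_eq {n : ℕ} (hn : 1 ≤ n) {ε b : ℝ} (hε : 0 < ε) (hb : 0 < b) :
    ∃ B : ℝ[X], derivative (chiPoly n ε b) = (X - C ε) ^ 5 * B ∧
      ∀ x ∈ Icc ε (b + ε), B.eval x ≠ 0 := by
  obtain ⟨B, hB, hBε⟩ : ∃ B : ℝ[X], derivative (chiPoly n ε b) = (X - C ε) ^ 5 * B ∧
      B.eval ε ≠ 0 := by
    rw [chiPoly_eq_X_sub_C_pow_mul]
    exact exists_derivative_eq_X_sub_C_pow_mul (by simp [rhoCofactor, hε.ne', hb.ne'])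
  refine ⟨B, hB, ?_⟩
  rintro x ⟨hx, hxb⟩
  rcases hx.eq_or_lt with rfl | hx
  · exact hBε
  have hpos := eval_derivative_chiPoly_pos hn hε hb hx hxb
  rw [hB, eval_mul] at hpos
  exact right_ne_zero_of_mul hpos.ne'

end

theorem stmt_8 (n : ℕ) (hn : 1 ≤ n) (ε b : ℝ) (hε : 0 < ε) (hb : 0 < b)
    (ρ χ χn : ℝ → ℝ)
    (hρ : ∀ x : ℝ, ρ x = 2772 * ∫ y in (0:ℝ)..x, y ^ 5 * (1 - y) ^ 5)
    (hχ : ∀ x : ℝ, χ x =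
      if x ≤ ε then 0 else if x < b + ε then ρ ((x - ε) / b) else 1)
    (hχn : ∀ x : ℝ, χn x = x ^ n * χ x) :
    Tendsto (fun x : ℝ => (iteratedDeriv 3 χn x) ^ 2 / deriv χn x)
      (𝓝[>] ε) (𝓝 0) ∧
    ∃ c : ℝ, ∀ x ∈ Set.Icc ε (b + ε),
      |(iteratedDeriv 3 χn x) ^ 2 / deriv χn x| ≤ c := by
  have hχP : EqOn χn (chiPoly n ε b).eval (Ioo ε (b + ε)) := fun x hx => by
    rw [hχn, hχ, if_neg hx.1.not_ge, if_pos hx.2, hρ, integral_eq_eval_rhoPoly, div_eq_inv_mul]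
    simp [chiPoly]
  have hderiv (k : ℕ) :
      EqOn (iteratedDeriv k χn) (derivative^[k] (chiPoly n ε b)).eval (Ioo ε (b + ε)) := by
    rw [← iteratedDeriv_eval]
    exact hχP.iteratedDeriv_of_isOpen isOpen_Ioo k
  obtain ⟨A, hA⟩ := X_sub_C_pow_dvd_iterate_derivative_chiPoly n ε b
  obtain ⟨B, hB, hB0⟩ := exists_derivative_chiPoly_eq hn hε hb
  refine tendsto_sq_div_and_exists_abs_le (by linarith) A.continuous B.continuous hB0
    (fun x hx => ?_) (fun x hx => ?_)
  · rw [hderiv 3 hx, hA]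
    simp
  · rw [← iteratedDeriv_one, hderiv 1 hx, Function.iterate_one, hB]
    simp
end

section
/- Let n ∈ ℤ⁺ and ε, b > 0, and χₙ(x;ε,b) = xⁿχ(x;ε,b). Then there is a constant c = c(n,b) such that for all x ≥ 0, (χₙ'''(x;ε,b))² ≤ c·(1 + χₙ(x;ε,b))·χₙ'(x;ε,b) wherever χₙ'(x;ε,b) > 0, and more precisely |(χₙ''')²/χₙ'| ≤ c(1+χₙ) on (ε, ∞). -/
/-!
Write `χₙ(x) = xⁿ S(r(x))` with the polynomial `S(t) = 2772 ∫₀ᵗ y⁵(1-y)⁵ dy` and the clamped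
ramp `r(x) = max 0 (min 1 ((x - ε)/b))`; this holds on all of `ℝ` since `S 0 = 0`, `S 1 = 1`.
As `S'`, `S''`, `S'''` vanish at `0` and `1`, `S ∘ r` is three times differentiable, and
Leibniz' rule gives `χₙ' = (xⁿ)' S + xⁿ S'/b ≥ 0` and
`χₙ''' = (xⁿ)''' S + 3 (xⁿ)'' S'/b + 3 (xⁿ)' S''/b² + xⁿ S'''/b³`.
For `x ≥ ε` each derivative of `xⁿ` is at most `n/ε` times the previous one, which bounds the
first square by `(n/ε)⁵ χₙ χₙ'`. The other three squares are at most multiples of `x²ⁿ S'`, as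
`S'², S''², S'''² ≤ 277200 S'` on `[0, 1]`, and `x²ⁿ S' ≤ (b + ε)ⁿ xⁿ S'` because `S' ∘ r`
vanishes for `x ≥ b + ε`. For `x ≤ ε` the derivative `χₙ'` vanishes.
-/

open MeasureTheory intervalIntegral Set

theorem hasDerivAt_comp_max {f f' : ℝ → ℝ} {a : ℝ} (hf : ∀ x, HasDerivAt f (f' x) x)
    (ha : f' a = 0) (t : ℝ) : HasDerivAt (fun t => f (max a t)) (f' (max a t)) t := by
  rcases lt_trichotomy t a with ht | rfl | ht
  · rw [max_eq_left ht.le, ha]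
    apply (hasDerivAt_const t (f a)).congr_of_eventuallyEq
    filter_upwards [Iio_mem_nhds ht] with s hs
    rw [max_eq_left hs.le]
  · have hl : HasDerivWithinAt (fun s => f (max t s)) 0 (Iic t) t :=
      (hasDerivWithinAt_const t _ (f t)).congr (fun s hs => by rw [max_eq_left hs]) (by simp)
    have hr : HasDerivWithinAt (fun s => f (max t s)) 0 (Ici t) t :=
      ha ▸ (hf t).hasDerivWithinAt.congr (fun s hs => by rw [max_eq_right hs]) (by simp)
    simpa [ha, Iic_union_Ici] using hl.union hr
  · rw [max_eq_right ht.le]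
    apply (hf t).congr_of_eventuallyEq
    filter_upwards [Ioi_mem_nhds ht] with s hs
    rw [max_eq_right hs.le]

theorem hasDerivAt_comp_min {f f' : ℝ → ℝ} {a : ℝ} (hf : ∀ x, HasDerivAt f (f' x) x)
    (ha : f' a = 0) (t : ℝ) : HasDerivAt (fun t => f (min a t)) (f' (min a t)) t := by
  have hneg : ∀ s, HasDerivAt (fun s => f (-s)) (-f' (-s)) s := fun s => by
    simpa [Function.comp_def] using (hf (-s)).comp s (hasDerivAt_neg s)
  have := (hasDerivAt_comp_max hneg (a := -a) (by simp [ha]) (-t)).comp t (hasDerivAt_neg t)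
  simpa [Function.comp_def, max_neg_neg] using this

def smoothstep (t : ℝ) : ℝ :=
  462 * t ^ 6 - 1980 * t ^ 7 + 3465 * t ^ 8 - 3080 * t ^ 9 + 1386 * t ^ 10 - 252 * t ^ 11

def smoothstep₁ (t : ℝ) : ℝ := 2772 * t ^ 5 * (1 - t) ^ 5

def smoothstep₂ (t : ℝ) : ℝ := 13860 * t ^ 4 * (1 - t) ^ 4 * (1 - 2 * t)

def smoothstep₃ (t : ℝ) : ℝ := 2772 * t ^ 3 * (1 - t) ^ 3 * (20 - 90 * t + 90 * t ^ 2)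

theorem hasDerivAt_smoothstep (t : ℝ) : HasDerivAt smoothstep (smoothstep₁ t) t := by
  have h := ((((((hasDerivAt_pow 6 t).const_mul 462).fun_sub
    ((hasDerivAt_pow 7 t).const_mul 1980)).fun_add ((hasDerivAt_pow 8 t).const_mul 3465)).fun_sub
    ((hasDerivAt_pow 9 t).const_mul 3080)).fun_add ((hasDerivAt_pow 10 t).const_mul 1386)).fun_sub
    ((hasDerivAt_pow 11 t).const_mul 252)
  exact h.congr_deriv (by simp only [smoothstep₁]; push_cast; ring)

theorem hasDerivAt_smoothstep₁ (t : ℝ) : HasDerivAt smoothstep₁ (smoothstep₂ t) t := by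
  have h := ((hasDerivAt_pow 5 t).const_mul 2772).fun_mul
    (((hasDerivAt_id' t).const_sub 1).fun_pow 5)
  exact h.congr_deriv (by simp only [smoothstep₂]; push_cast; ring)

theorem hasDerivAt_smoothstep₂ (t : ℝ) : HasDerivAt smoothstep₂ (smoothstep₃ t) t := by
  have h := (((hasDerivAt_pow 4 t).const_mul 13860).fun_mul
    (((hasDerivAt_id' t).const_sub 1).fun_pow 4)).fun_mul
    (((hasDerivAt_id' t).const_mul 2).const_sub 1)
  exact h.congr_deriv (by simp only [smoothstep₃]; push_cast; ring)

@[simp] theorem smoothstep_zero : smoothstep 0 = 0 := by norm_num [smoothstep]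
@[simp] theorem smoothstep_one : smoothstep 1 = 1 := by norm_num [smoothstep]
@[simp] theorem smoothstep₁_zero : smoothstep₁ 0 = 0 := by norm_num [smoothstep₁]
@[simp] theorem smoothstep₁_one : smoothstep₁ 1 = 0 := by norm_num [smoothstep₁]
@[simp] theorem smoothstep₂_zero : smoothstep₂ 0 = 0 := by norm_num [smoothstep₂]
@[simp] theorem smoothstep₂_one : smoothstep₂ 1 = 0 := by norm_num [smoothstep₂]
@[simp] theorem smoothstep₃_zero : smoothstep₃ 0 = 0 := by norm_num [smoothstep₃]
@[simp] theorem smoothstep₃_one : smoothstep₃ 1 = 0 := by norm_num [smoothstep₃]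

theorem smoothstep_eq_integral (x : ℝ) :
    smoothstep x = 2772 * ∫ y in (0:ℝ)..x, y ^ 5 * (1 - y) ^ 5 := by
  rw [← intervalIntegral.integral_const_mul]
  have hint : ∫ y in (0:ℝ)..x, smoothstep₁ y = smoothstep x - smoothstep 0 :=
    integral_eq_sub_of_hasDerivAt (fun y _ => hasDerivAt_smoothstep y)
      ((by unfold smoothstep₁; fun_prop : Continuous smoothstep₁).intervalIntegrable _ _)
  simp only [smoothstep₁, mul_assoc] at hint
  rw [hint, smoothstep_zero, sub_zero]

theorem smoothstep_strictMonoOn : StrictMonoOn smoothstep (Icc 0 1) := by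
  refine strictMonoOn_of_deriv_pos (convex_Icc 0 1)
    (fun t _ => (hasDerivAt_smoothstep t).continuousAt.continuousWithinAt) fun t ht => ?_
  rw [interior_Icc] at ht
  rw [(hasDerivAt_smoothstep t).deriv, smoothstep₁]
  have : 0 < 1 - t := by linarith [ht.2]
  have := ht.1
  positivity

theorem smoothstep_nonneg {t : ℝ} (ht : t ∈ Icc 0 1) : 0 ≤ smoothstep t := by
  simpa using smoothstep_strictMonoOn.monotoneOn ⟨le_rfl, zero_le_one⟩ ht ht.1

theorem smoothstep₁_nonneg {t : ℝ} (ht : t ∈ Icc 0 1) : 0 ≤ smoothstep₁ t := by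
  have := ht.1
  have : 0 ≤ 1 - t := by linarith [ht.2]
  unfold smoothstep₁; positivity

theorem sq_smoothstep₁_le {t : ℝ} (ht : t ∈ Icc 0 1) :
    smoothstep₁ t ^ 2 ≤ 277200 * smoothstep₁ t := by
  have h1 : 0 ≤ 1 - t := by linarith [ht.2]
  have hfac : smoothstep₁ t ^ 2 = smoothstep₁ t * (2772 * (t * (1 - t)) ^ 5) := by
    unfold smoothstep₁; ring
  have hle : (t * (1 - t)) ^ 5 ≤ 1 := pow_le_one₀ (mul_nonneg ht.1 h1) (by nlinarith [ht.1])
  rw [hfac]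
  nlinarith [smoothstep₁_nonneg ht]

theorem sq_smoothstep₂_le {t : ℝ} (ht : t ∈ Icc 0 1) :
    smoothstep₂ t ^ 2 ≤ 277200 * smoothstep₁ t := by
  have h0 := ht.1
  have h1 : 0 ≤ 1 - t := by linarith [ht.2]
  have hfac : smoothstep₂ t ^ 2 =
      smoothstep₁ t * (69300 * ((t * (1 - t)) ^ 3 * (1 - 2 * t) ^ 2)) := by
    unfold smoothstep₁ smoothstep₂; ring
  have hle : (t * (1 - t)) ^ 3 * (1 - 2 * t) ^ 2 ≤ 1 := by
    have : t * (1 - t) ≤ 1 := by nlinarith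
    have : (1 - 2 * t) ^ 2 ≤ 1 := by nlinarith
    exact mul_le_one₀ (pow_le_one₀ (by positivity) (by assumption)) (by positivity) this
  rw [hfac]
  nlinarith [smoothstep₁_nonneg ht]

theorem sq_smoothstep₃_le {t : ℝ} (ht : t ∈ Icc 0 1) :
    smoothstep₃ t ^ 2 ≤ 277200 * smoothstep₁ t := by
  have h0 := ht.1
  have h1 : 0 ≤ 1 - t := by linarith [ht.2]
  have hfac : smoothstep₃ t ^ 2 =
      smoothstep₁ t * (2772 * (t * (1 - t) * (20 - 90 * t + 90 * t ^ 2) ^ 2)) := by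
    unfold smoothstep₁ smoothstep₃; ring
  have hle : t * (1 - t) * (20 - 90 * t + 90 * t ^ 2) ^ 2 ≤ 100 := by
    have hq : (20 - 90 * t + 90 * t ^ 2) ^ 2 ≤ 400 := by
      nlinarith [mul_nonneg h0 h1, sq_nonneg (1 - 2 * t)]
    have ht4 : t * (1 - t) ≤ 1 / 4 := by nlinarith [sq_nonneg (1 - 2 * t)]
    nlinarith [mul_nonneg h0 h1, sq_nonneg (20 - 90 * t + 90 * t ^ 2)]
  rw [hfac]
  nlinarith [smoothstep₁_nonneg ht]

section Ramp

noncomputable def ramp (ε b x : ℝ) : ℝ := max 0 (min 1 ((x - ε) / b))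

variable {ε b x : ℝ}

theorem ramp_mem_Icc : ramp ε b x ∈ Icc 0 1 :=
  ⟨le_max_left _ _, max_le zero_le_one (min_le_left _ _)⟩

theorem ramp_of_le (hb : 0 < b) (hx : x ≤ ε) : ramp ε b x = 0 :=
  max_eq_left ((min_le_right _ _).trans (div_nonpos_of_nonpos_of_nonneg (by linarith) hb.le))

theorem ramp_of_ge (hb : 0 < b) (hx : b + ε ≤ x) : ramp ε b x = 1 := by
  rw [ramp, min_eq_left ((le_div_iff₀ hb).mpr (by linarith)), max_eq_right zero_le_one]

theorem hasDerivAt_comp_ramp {f f' : ℝ → ℝ} (hf : ∀ t, HasDerivAt f (f' t) t)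
    (h₀ : f' 0 = 0) (h₁ : f' 1 = 0) (ε b x : ℝ) :
    HasDerivAt (fun x => f (ramp ε b x)) (f' (ramp ε b x) / b) x := by
  have hclamp : ∀ t, HasDerivAt (fun t => f (max 0 (min 1 t))) (f' (max 0 (min 1 t))) t :=
    hasDerivAt_comp_min (f := fun t => f (max 0 t)) (hasDerivAt_comp_max hf h₀)
      (by simpa using h₁)
  exact ((hclamp _).comp x (((hasDerivAt_id x).sub_const ε).div_const b)).congr_deriv
    (mul_one_div _ _)

end Ramp

-- The `k`-th derivative of `xⁿ`; for `k > n` the truncated exponent is harmless since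
-- `n.descFactorial k = 0`.
def powDeriv (n k : ℕ) (x : ℝ) : ℝ := n.descFactorial k * x ^ (n - k)

@[simp] theorem powDeriv_zero (n : ℕ) (x : ℝ) : powDeriv n 0 x = x ^ n := by simp [powDeriv]

theorem hasDerivAt_powDeriv (n k : ℕ) (x : ℝ) :
    HasDerivAt (powDeriv n k) (powDeriv n (k + 1) x) x := by
  refine ((hasDerivAt_pow (n - k) x).const_mul (n.descFactorial k : ℝ)).congr_deriv ?_
  rw [powDeriv, Nat.descFactorial_succ, Nat.sub_sub]
  push_cast
  ring

theorem powDeriv_nonneg (n k : ℕ) {x : ℝ} (hx : 0 ≤ x) : 0 ≤ powDeriv n k x := by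
  unfold powDeriv; positivity

theorem powDeriv_add_le (n j k : ℕ) {ε x : ℝ} (hε : 0 < ε) (hx : ε ≤ x) :
    powDeriv n (j + k) x ≤ (n / ε) ^ k * powDeriv n j x := by
  by_cases hn : j + k ≤ n
  · have hx0 : 0 < x := hε.trans_le hx
    have hfac : ((n - j).descFactorial k : ℝ) ≤ n ^ k := by
      exact_mod_cast (Nat.descFactorial_le_pow _ k).trans (Nat.pow_le_pow_left (Nat.sub_le n j) k)
    have hpow : x ^ (n - (j + k)) ≤ x ^ (n - j) / ε ^ k := by
      rw [le_div_iff₀ (by positivity)]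
      calc x ^ (n - (j + k)) * ε ^ k ≤ x ^ (n - (j + k)) * x ^ k := by gcongr
        _ = x ^ (n - j) := by rw [← pow_add]; congr 1; omega
    have hdesc : (n.descFactorial (j + k) : ℝ) = (n - j).descFactorial k * n.descFactorial j := by
      rw [← Nat.descFactorial_mul_descFactorial (Nat.le_add_right j k), Nat.add_sub_cancel_left]
      push_cast; ring
    calc powDeriv n (j + k) x
        = n.descFactorial j * (((n - j).descFactorial k : ℝ) * x ^ (n - (j + k))) := by
          rw [powDeriv, hdesc]; ring
      _ ≤ n.descFactorial j * ((n : ℝ) ^ k * (x ^ (n - j) / ε ^ k)) := by gcongr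
      _ = (n / ε) ^ k * powDeriv n j x := by rw [powDeriv]; ring
  · rw [powDeriv, Nat.descFactorial_eq_zero_iff_lt.mpr (by omega)]
    simpa using mul_nonneg (by positivity) (powDeriv_nonneg n j (hε.le.trans hx))

theorem iteratedDeriv_three_mul {𝕜 : Type*} [NontriviallyNormedField 𝕜]
    {f₀ f₁ f₂ f₃ g₀ g₁ g₂ g₃ : 𝕜 → 𝕜}
    (hf₀ : ∀ x, HasDerivAt f₀ (f₁ x) x) (hf₁ : ∀ x, HasDerivAt f₁ (f₂ x) x)
    (hf₂ : ∀ x, HasDerivAt f₂ (f₃ x) x) (hg₀ : ∀ x, HasDerivAt g₀ (g₁ x) x)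
    (hg₁ : ∀ x, HasDerivAt g₁ (g₂ x) x) (hg₂ : ∀ x, HasDerivAt g₂ (g₃ x) x)
    (x : 𝕜) :
    iteratedDeriv 3 (fun x => f₀ x * g₀ x) x =
      f₃ x * g₀ x + 3 * (f₂ x * g₁ x) + 3 * (f₁ x * g₂ x) + f₀ x * g₃ x := by
  have d₁ : deriv (fun x => f₀ x * g₀ x) = fun x => f₁ x * g₀ x + f₀ x * g₁ x :=
    funext fun x => ((hf₀ x).fun_mul (hg₀ x)).deriv
  have d₂ : deriv (fun x => f₁ x * g₀ x + f₀ x * g₁ x) =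
      fun x => f₂ x * g₀ x + 2 * (f₁ x * g₁ x) + f₀ x * g₂ x :=
    funext fun x =>
      (((hf₁ x).fun_mul (hg₀ x)).fun_add ((hf₀ x).fun_mul (hg₁ x))).deriv.trans (by ring)
  have d₃ : deriv (fun x => f₂ x * g₀ x + 2 * (f₁ x * g₁ x) + f₀ x * g₂ x) =
      fun x => f₃ x * g₀ x + 3 * (f₂ x * g₁ x) + 3 * (f₁ x * g₂ x) + f₀ x * g₃ x :=
    funext fun x => ((((hf₂ x).fun_mul (hg₀ x)).fun_add
      (((hf₁ x).fun_mul (hg₁ x)).const_mul 2)).fun_add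
      ((hf₀ x).fun_mul (hg₂ x))).deriv.trans (by ring)
  rw [iteratedDeriv_succ, iteratedDeriv_succ, iteratedDeriv_one, d₁, d₂, d₃]

theorem sq_powDeriv_three_le (n : ℕ) {ε x : ℝ} (hε : 0 < ε) (hx : ε ≤ x) :
    powDeriv n 3 x ^ 2 ≤ (n / ε) ^ 5 * (x ^ n * powDeriv n 1 x) := by
  have hD₁ : powDeriv n 1 x ≤ n / ε * x ^ n := by simpa using powDeriv_add_le n 0 1 hε hx
  have hD₃ : powDeriv n 3 x ≤ (n / ε) ^ 2 * powDeriv n 1 x := powDeriv_add_le n 1 2 hε hx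
  have hx₀ : 0 ≤ x := hε.le.trans hx
  calc powDeriv n 3 x ^ 2 ≤ ((n / ε) ^ 2 * powDeriv n 1 x) ^ 2 := by
        gcongr; exact powDeriv_nonneg n 3 hx₀
    _ = (n / ε) ^ 4 * powDeriv n 1 x * powDeriv n 1 x := by ring
    _ ≤ (n / ε) ^ 4 * (n / ε * x ^ n) * powDeriv n 1 x := by
        gcongr; exact powDeriv_nonneg n 1 hx₀
    _ = (n / ε) ^ 5 * (x ^ n * powDeriv n 1 x) := by ring

theorem sq_add_add_add_le (a₁ a₂ a₃ a₄ : ℝ) :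
    (a₁ + a₂ + a₃ + a₄) ^ 2 ≤ 4 * (a₁ ^ 2 + a₂ ^ 2 + a₃ ^ 2 + a₄ ^ 2) := by
  linarith [sq_nonneg (a₁ - a₂), sq_nonneg (a₁ - a₃), sq_nonneg (a₁ - a₄),
    sq_nonneg (a₂ - a₃), sq_nonneg (a₂ - a₄), sq_nonneg (a₃ - a₄)]

theorem sq_leibniz_tail_le (n : ℕ) {ε b x p r s K : ℝ} (hε : 0 < ε) (hx : ε ≤ x)
    (hp : p ^ 2 ≤ K * p) (hr : r ^ 2 ≤ K * p) (hs : s ^ 2 ≤ K * p) :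
    (3 * (powDeriv n 2 x * (p / b))) ^ 2 + (3 * (powDeriv n 1 x * (r / b ^ 2))) ^ 2
        + (x ^ n * (s / b ^ 3)) ^ 2 ≤
      (9 * (n / ε) ^ 4 / b ^ 2 + 9 * (n / ε) ^ 2 / b ^ 4 + 1 / b ^ 6) * K * ((x ^ n) ^ 2 * p) := by
  have hx₀ : 0 ≤ x := hε.le.trans hx
  have hD₁ : powDeriv n 1 x ≤ n / ε * x ^ n := by simpa using powDeriv_add_le n 0 1 hε hx
  have hD₂ : powDeriv n 2 x ≤ (n / ε) ^ 2 * x ^ n := by simpa using powDeriv_add_le n 0 2 hε hx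
  have hB : powDeriv n 2 x ^ 2 * p ^ 2 ≤ ((n / ε) ^ 2 * x ^ n) ^ 2 * (K * p) := by
    gcongr; exact powDeriv_nonneg n 2 hx₀
  have hC : powDeriv n 1 x ^ 2 * r ^ 2 ≤ (n / ε * x ^ n) ^ 2 * (K * p) := by
    gcongr; exact powDeriv_nonneg n 1 hx₀
  have hD : (x ^ n) ^ 2 * s ^ 2 ≤ (x ^ n) ^ 2 * (K * p) := by gcongr
  calc _ = 9 / b ^ 2 * (powDeriv n 2 x ^ 2 * p ^ 2) + 9 / b ^ 4 * (powDeriv n 1 x ^ 2 * r ^ 2)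
        + 1 / b ^ 6 * ((x ^ n) ^ 2 * s ^ 2) := by ring
    _ ≤ 9 / b ^ 2 * (((n / ε) ^ 2 * x ^ n) ^ 2 * (K * p)) + 9 / b ^ 4 * ((n / ε * x ^ n) ^ 2
        * (K * p)) + 1 / b ^ 6 * ((x ^ n) ^ 2 * (K * p)) := by gcongr
    _ = _ := by ring

theorem sq_leibniz_expansion_le (n : ℕ) {ε b x q p r s R : ℝ} (hε : 0 < ε) (hb : 0 < b)
    (hx : ε ≤ x) (hq : 0 ≤ q) (hp : 0 ≤ p) (hp₂ : p ^ 2 ≤ 277200 * p)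
    (hr : r ^ 2 ≤ 277200 * p) (hs : s ^ 2 ≤ 277200 * p) (hR₀ : 0 ≤ R) (hR : x ^ n * p ≤ R * p) :
    (powDeriv n 3 x * q + 3 * (powDeriv n 2 x * (p / b)) + 3 * (powDeriv n 1 x * (r / b ^ 2))
        + x ^ n * (s / b ^ 3)) ^ 2 ≤
      4 * ((n / ε) ^ 5 + 277200 * R * b * (9 * (n / ε) ^ 4 / b ^ 2 + 9 * (n / ε) ^ 2 / b ^ 4
        + 1 / b ^ 6)) * (1 + x ^ n * q) * (powDeriv n 1 x * q + x ^ n * (p / b)) := by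
  set L := (n : ℝ) / ε
  set M := 9 * L ^ 4 / b ^ 2 + 9 * L ^ 2 / b ^ 4 + 1 / b ^ 6
  set X := x ^ n
  set W := (1 + X * q) * (powDeriv n 1 x * q + X * (p / b))
  have hx₀ : 0 ≤ x := hε.le.trans hx
  have hA : (powDeriv n 3 x * q) ^ 2 ≤ L ^ 5 * (X * q * (powDeriv n 1 x * q)) :=
    calc (powDeriv n 3 x * q) ^ 2 = powDeriv n 3 x ^ 2 * q ^ 2 := by ring
      _ ≤ L ^ 5 * (X * powDeriv n 1 x) * q ^ 2 := by gcongr; exact sq_powDeriv_three_le n hε hx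
      _ = L ^ 5 * (X * q * (powDeriv n 1 x * q)) := by ring
  have htail := sq_leibniz_tail_le n (b := b) hε hx hp₂ hr hs
  have hXp : X ^ 2 * p ≤ R * b * (X * (p / b)) :=
    calc X ^ 2 * p = X * (X * p) := by ring
      _ ≤ X * (R * p) := by gcongr
      _ = R * b * (X * (p / b)) := by field_simp
  have h₁ : 0 ≤ powDeriv n 1 x * q := mul_nonneg (powDeriv_nonneg n 1 hx₀) hq
  have h₂ : 0 ≤ X * (p / b) := by positivity
  have h₃ : 0 ≤ X * q := by positivity
  have hW₁ : X * q * (powDeriv n 1 x * q) ≤ W :=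
    mul_le_mul (by linarith) (by linarith) h₁ (by linarith)
  have hW₂ : X * (p / b) ≤ W :=
    (one_mul _).symm.trans_le (mul_le_mul (by linarith) (by linarith) h₂ (by linarith))
  calc _ ≤ 4 * ((powDeriv n 3 x * q) ^ 2 + (3 * (powDeriv n 2 x * (p / b))) ^ 2
        + (3 * (powDeriv n 1 x * (r / b ^ 2))) ^ 2 + (X * (s / b ^ 3)) ^ 2) :=
        sq_add_add_add_le _ _ _ _
    _ ≤ 4 * (L ^ 5 * (X * q * (powDeriv n 1 x * q)) + 277200 * R * b * M * (X * (p / b))) := by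
        have : M * 277200 * (X ^ 2 * p) ≤ M * 277200 * (R * b * (X * (p / b))) := by
          gcongr
        linarith
    _ ≤ 4 * (L ^ 5 * W + 277200 * R * b * M * W) := by gcongr
    _ = _ := by ring

section Cutoff

variable {n : ℕ} {ε b x : ℝ}

/-- `cutoff ε b` and `cutoffPow n ε b` are the paper's `χ(·; ε, b)` and `χₙ(·; ε, b)`. -/
noncomputable def cutoff (ε b x : ℝ) : ℝ := smoothstep (ramp ε b x)

noncomputable def cutoffPow (n : ℕ) (ε b x : ℝ) : ℝ := x ^ n * cutoff ε b x

theorem cutoff_eq_ite (hb : 0 < b) (x : ℝ) : cutoff ε b x =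
    if x ≤ ε then 0 else if x < b + ε then smoothstep ((x - ε) / b) else 1 := by
  split_ifs with hxε hxb
  · simp [cutoff, ramp_of_le hb hxε]
  · have h₀ : 0 ≤ (x - ε) / b := div_nonneg (by linarith) hb.le
    have h₁ : (x - ε) / b ≤ 1 := (div_le_one hb).mpr (by linarith)
    rw [cutoff, ramp, min_eq_right h₁, max_eq_right h₀]
  · simp [cutoff, ramp_of_ge hb (not_lt.mp hxb)]

theorem cutoffPow_nonneg (hε : 0 < ε) (hb : 0 < b) (x : ℝ) : 0 ≤ cutoffPow n ε b x := by
  rcases le_or_gt x ε with hx | hx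
  · simp [cutoffPow, cutoff, ramp_of_le hb hx]
  · have := smoothstep_nonneg (ramp_mem_Icc (ε := ε) (b := b) (x := x))
    have : 0 < x := hε.trans hx
    unfold cutoffPow cutoff; positivity

theorem cutoffPow_eq_mul :
    cutoffPow n ε b = fun x => powDeriv n 0 x * smoothstep (ramp ε b x) :=
  funext fun x => by simp [cutoffPow, cutoff]

theorem hasDerivAt_cutoffPow (x : ℝ) :
    HasDerivAt (cutoffPow n ε b)
      (powDeriv n 1 x * cutoff ε b x + x ^ n * (smoothstep₁ (ramp ε b x) / b)) x := by
  rw [cutoffPow_eq_mul, ← powDeriv_zero]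
  exact (hasDerivAt_powDeriv n 0 x).fun_mul
    (hasDerivAt_comp_ramp hasDerivAt_smoothstep (by simp) (by simp) ε b x)

theorem iteratedDeriv_three_cutoffPow (x : ℝ) :
    iteratedDeriv 3 (cutoffPow n ε b) x =
      powDeriv n 3 x * cutoff ε b x + 3 * (powDeriv n 2 x * (smoothstep₁ (ramp ε b x) / b))
        + 3 * (powDeriv n 1 x * (smoothstep₂ (ramp ε b x) / b ^ 2))
        + x ^ n * (smoothstep₃ (ramp ε b x) / b ^ 3) := by
  have hg₀ := hasDerivAt_comp_ramp hasDerivAt_smoothstep (by simp) (by simp) ε b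
  have hg₁ x :=
    (hasDerivAt_comp_ramp hasDerivAt_smoothstep₁ (by simp) (by simp) ε b x).div_const b
  have hg₂ x := ((hasDerivAt_comp_ramp hasDerivAt_smoothstep₂ (by simp) (by simp) ε b
    x).div_const b).div_const b
  rw [cutoffPow_eq_mul, iteratedDeriv_three_mul (hasDerivAt_powDeriv n 0)
    (hasDerivAt_powDeriv n 1) (hasDerivAt_powDeriv n 2) hg₀ hg₁ hg₂, powDeriv_zero, cutoff]
  ring

theorem deriv_cutoffPow_of_le (hb : 0 < b) (hx : x ≤ ε) : deriv (cutoffPow n ε b) x = 0 := by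
  simp [(hasDerivAt_cutoffPow x).deriv, cutoff, ramp_of_le hb hx]

theorem deriv_cutoffPow_nonneg (hε : 0 < ε) (hb : 0 < b) (x : ℝ) :
    0 ≤ deriv (cutoffPow n ε b) x := by
  rcases le_or_gt x ε with hx | hx
  · exact (deriv_cutoffPow_of_le hb hx).ge
  · have hx₀ : 0 ≤ x := (hε.trans hx).le
    have := smoothstep_nonneg (ramp_mem_Icc (ε := ε) (b := b) (x := x))
    have := smoothstep₁_nonneg (ramp_mem_Icc (ε := ε) (b := b) (x := x))
    have := powDeriv_nonneg n 1 hx₀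
    rw [(hasDerivAt_cutoffPow x).deriv, cutoff]
    positivity

theorem exists_sq_iteratedDeriv_cutoffPow_le (hε : 0 < ε) (hb : 0 < b) :
    ∃ c, 0 ≤ c ∧ ∀ x, ε < x → iteratedDeriv 3 (cutoffPow n ε b) x ^ 2 ≤
      c * (1 + cutoffPow n ε b x) * deriv (cutoffPow n ε b) x := by
  refine ⟨4 * ((n / ε) ^ 5 + 277200 * (b + ε) ^ n * b * (9 * (n / ε) ^ 4 / b ^ 2
    + 9 * (n / ε) ^ 2 / b ^ 4 + 1 / b ^ 6)), by positivity, fun x hx => ?_⟩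
  have hR : x ^ n * smoothstep₁ (ramp ε b x) ≤ (b + ε) ^ n * smoothstep₁ (ramp ε b x) := by
    rcases le_or_gt x (b + ε) with hxb | hxb
    · have := (hε.trans hx).le
      gcongr
      exact smoothstep₁_nonneg ramp_mem_Icc
    · simp [ramp_of_ge hb hxb.le]
  rw [iteratedDeriv_three_cutoffPow, (hasDerivAt_cutoffPow x).deriv, cutoffPow, cutoff]
  exact sq_leibniz_expansion_le n hε hb hx.le (smoothstep_nonneg ramp_mem_Icc)
    (smoothstep₁_nonneg ramp_mem_Icc) (sq_smoothstep₁_le ramp_mem_Icc)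
    (sq_smoothstep₂_le ramp_mem_Icc) (sq_smoothstep₃_le ramp_mem_Icc) (by positivity) hR

end Cutoff

theorem stmt_9_general (n : ℕ) (ε b : ℝ) (hε : 0 < ε) (hb : 0 < b)
    (ρ χ χn : ℝ → ℝ)
    (hρ : ∀ x : ℝ, ρ x = 2772 * ∫ y in (0:ℝ)..x, y ^ 5 * (1 - y) ^ 5)
    (hχ : ∀ x : ℝ, χ x =
      if x ≤ ε then 0 else if x < b + ε then ρ ((x - ε) / b) else 1)
    (hχn : ∀ x : ℝ, χn x = x ^ n * χ x) :
    ∃ c : ℝ,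
      (∀ x : ℝ, 0 ≤ x → 0 < deriv χn x →
        (iteratedDeriv 3 χn x) ^ 2 ≤ c * (1 + χn x) * deriv χn x) ∧
      (∀ x ∈ Set.Ioi ε,
        |(iteratedDeriv 3 χn x) ^ 2 / deriv χn x| ≤ c * (1 + χn x)) := by
  have hρ' : ρ = smoothstep := funext fun x => (hρ x).trans (smoothstep_eq_integral x).symm
  obtain rfl : χn = cutoffPow n ε b :=
    funext fun x => by rw [hχn, hχ, hρ', cutoffPow, cutoff_eq_ite hb]
  obtain ⟨c, hc₀, hc⟩ := exists_sq_iteratedDeriv_cutoffPow_le (n := n) hε hb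
  refine ⟨c, fun x _ hpos => ?_, fun x hx => ?_⟩
  · rcases le_or_gt x ε with hxε | hxε
    · exact absurd (deriv_cutoffPow_of_le hb hxε) hpos.ne'
    · exact hc x hxε
  · have hd := deriv_cutoffPow_nonneg (n := n) hε hb x
    have hχ₀ := cutoffPow_nonneg (n := n) hε hb x
    rw [abs_of_nonneg (div_nonneg (sq_nonneg _) hd)]
    exact div_le_of_le_mul₀ hd (mul_nonneg hc₀ (by linarith)) (hc x hx)

theorem stmt_9 (n : ℕ) (hn : 1 ≤ n) (ε b : ℝ) (hε : 0 < ε) (hb : 0 < b)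
    (ρ χ χn : ℝ → ℝ)
    (hρ : ∀ x : ℝ, ρ x = 2772 * ∫ y in (0:ℝ)..x, y ^ 5 * (1 - y) ^ 5)
    (hχ : ∀ x : ℝ, χ x =
      if x ≤ ε then 0 else if x < b + ε then ρ ((x - ε) / b) else 1)
    (hχn : ∀ x : ℝ, χn x = x ^ n * χ x) :
    ∃ c : ℝ,
      (∀ x : ℝ, 0 ≤ x → 0 < deriv χn x →
        (iteratedDeriv 3 χn x) ^ 2 ≤ c * (1 + χn x) * deriv χn x) ∧
      (∀ x ∈ Set.Ioi ε,
        |(iteratedDeriv 3 χn x) ^ 2 / deriv χn x| ≤ c * (1 + χn x)) :=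
  stmt_9_general n ε b hε hb ρ χ χn hρ hχ hχn
end
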